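/- For every n ≥ 1, every n-cylinder [w], and every x ∈ [w], one has exp(−M·‖φ‖ − var φ) · exp(S_nφ(x)) ≤ μ([w]) ≤ exp(var φ) · exp(S_nφ(x)) (Bowen's Gibbs estimate for the measure of a cylinder set). -/
import Mathlib


open MeasureTheory Real
open scoped ENNReal

variable {r : ℕ}

/-- The one-sided subshift of finite type determined by the transition
matrix `A`. -/
abbrev OneSided (A : Fin r → Fin r → Prop) : Type :=
  {x : ℕ → Fin r // ∀ i, A (x i) (x (i + 1))}

/-- The shift map `σ` on the one-sided subshift. -/
def shift1 {A : Fin r → Fin r → Prop} (x : OneSided A) : OneSided A :=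
  ⟨fun i => x.1 (i + 1), fun i => x.2 (i + 1)⟩

/-- The metric `d(x,y) = ∑_{i ∈ ℕ, x i ≠ y i} 2^{-i}` on the one-sided
subshift. -/
noncomputable def dist1 {A : Fin r → Fin r → Prop} (x y : OneSided A) : ℝ :=
  ∑' i : ℕ, if x.1 i ≠ y.1 i then ((2 : ℝ)⁻¹) ^ i else 0

/-- `ψ` is Hölder with respect to the distance function `d`. -/
def IsHolderWrt {X : Type*} (d : X → X → ℝ) (ψ : X → ℝ) : Prop :=
  ∃ C > 0, ∃ α ∈ Set.Ioc (0 : ℝ) 1, ∀ x y, |ψ x - ψ y| ≤ C * d x y ^ α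

/-- A word `w : Fin n → Fin r` is admissible if `A (w i) (w (i+1))` for all
`i < n − 1`. -/
def AdmissibleWord {n : ℕ} (A : Fin r → Fin r → Prop) (w : Fin n → Fin r) : Prop :=
  ∀ i : ℕ, ∀ h : i + 1 < n, A (w ⟨i, Nat.lt_of_succ_lt h⟩) (w ⟨i + 1, h⟩)

/-- The `n`-cylinder `[w]` of a word `w : Fin n → Fin r`. -/
def Cyl (A : Fin r → Fin r → Prop) {n : ℕ} (w : Fin n → Fin r) : Set (OneSided A) :=
  {x | ∀ i : Fin n, x.1 i = w i}

/-- `(P, μ)` is a conformal pair for `φ`: `μ` is a Borel probability measure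
with `μ(σ '' E) = ∫_E exp(P − φ) dμ` for every Borel `E` contained in a
1-cylinder.  This encodes `log(dμ(σx)/dμ(x)) = −φ(x) + P`. -/
def ConformalPair (A : Fin r → Fin r → Prop) (φ : OneSided A → ℝ) (P : ℝ)
    (μ : Measure (OneSided A)) : Prop :=
  IsProbabilityMeasure μ ∧
    ∀ (j : Fin r) (E : Set (OneSided A)), MeasurableSet E → (∀ x ∈ E, x.1 0 = j) →
      μ (shift1 '' E) = ∫⁻ x in E, ENNReal.ofReal (Real.exp (P - φ x)) ∂μ

/-- `Σ_A⁺` is transitive: some point has dense forward orbit under `σ`. -/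
def Transitive1 (A : Fin r → Fin r → Prop) : Prop :=
  ∃ x : OneSided A, Dense (Set.range fun n : ℕ => shift1^[n] x)

/-- `Σ_A⁺` is mixing with constant `M`: for all symbols `i`, `j` there is an
admissible word of length `M+1` beginning with `i` and ending with `j`. -/
def MixingWith (A : Fin r → Fin r → Prop) (M : ℕ) : Prop :=
  1 ≤ M ∧ ∀ i j : Fin r, ∃ w : Fin (M + 1) → Fin r,
    AdmissibleWord A w ∧ w 0 = i ∧ w (Fin.last M) = j


/-- `‖φ‖ = sup_x |φ(x)|`. -/
noncomputable def supNorm (A : Fin r → Fin r → Prop) (φ : OneSided A → ℝ) : ℝ :=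
  ⨆ x : OneSided A, |φ x|

/-- `var_k φ = sup {|φ(x) − φ(y)| : x i = y i for all i < k}`. -/
noncomputable def varK (A : Fin r → Fin r → Prop) (φ : OneSided A → ℝ) (k : ℕ) : ℝ :=
  sSup {v : ℝ | ∃ x y : OneSided A, (∀ i : ℕ, i < k → x.1 i = y.1 i) ∧ v = |φ x - φ y|}

/-- `var φ = ∑_{k=0}^∞ var_k φ`. -/
noncomputable def varSum (A : Fin r → Fin r → Prop) (φ : OneSided A → ℝ) : ℝ :=
  ∑' k : ℕ, varK A φ k


/-! ### Auxiliary development for Bowen's Gibbs estimate -/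

namespace BGE

variable {A : Fin r → Fin r → Prop}

def prepend (j : Fin r) (y : OneSided A) (h : A j (y.1 0)) : OneSided A :=
  ⟨fun i => match i with | 0 => j | (m+1) => y.1 m, by
    intro i
    match i with
    | 0 => exact h
    | (m+1) => exact y.2 m⟩

lemma shift1_prepend (j : Fin r) (y : OneSided A) (h : A j (y.1 0)) :
    shift1 (prepend j y h) = y := rfl

lemma measurable_coord (i : ℕ) : Measurable (fun x : OneSided A => x.1 i) :=
  (measurable_pi_apply i).comp measurable_subtype_coe

lemma measurableSet_cyl {n : ℕ} (w : Fin n → Fin r) : MeasurableSet (Cyl A w) := by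
  have h : Cyl A w = ⋂ i : Fin n, (fun x : OneSided A => x.1 i) ⁻¹' {w i} := by
    ext x; simp [Cyl, Set.mem_iInter]
  rw [h]
  exact MeasurableSet.iInter fun i => measurable_coord (↑i) (measurableSet_singleton _)

def CS (A : Fin r → Fin r → Prop) (S : Set (Fin r)) : Set (OneSided A) := {x | x.1 0 ∈ S}

lemma measurableSet_CS (S : Set (Fin r)) : MeasurableSet (CS A S) :=
  measurable_coord 0 (by measurability)

def Nx (A : Fin r → Fin r → Prop) (S : Set (Fin r)) : Set (Fin r) := {k | ∃ j ∈ S, A j k}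

lemma dist1_eq (z y : OneSided A) :
    dist1 z y = ∑' i : ℕ, if z.1 i ≠ y.1 i then ((2:ℝ)⁻¹) ^ i else 0 := rfl

lemma dist1_nonneg (z y : OneSided A) : 0 ≤ dist1 z y := by
  rw [dist1_eq]
  exact tsum_nonneg fun i => by split <;> positivity

lemma dist1_le {z y : OneSided A} {k : ℕ} (h : ∀ i, i < k → z.1 i = y.1 i) :
    dist1 z y ≤ 2 * ((2:ℝ)⁻¹) ^ k := by
  have hsum2 : Summable (fun i : ℕ => ((2:ℝ)⁻¹) ^ i) :=
    summable_geometric_of_lt_one (by norm_num) (by norm_num)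
  set g : ℕ → ℝ := fun i => if i < k then 0 else ((2:ℝ)⁻¹) ^ i with hg
  have hgnn : ∀ i, 0 ≤ g i := fun i => by
    simp only [hg]; split
    · exact le_refl 0
    · positivity
  have hgle : ∀ i, g i ≤ ((2:ℝ)⁻¹) ^ i := fun i => by
    simp only [hg]; split
    · positivity
    · exact le_rfl
  have hgs : Summable g := Summable.of_nonneg_of_le hgnn hgle hsum2
  set f : ℕ → ℝ := fun i => if z.1 i ≠ y.1 i then ((2:ℝ)⁻¹) ^ i else 0 with hf
  have hfle : ∀ i, f i ≤ g i := by
    intro i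
    by_cases hik : i < k
    · have hzy : z.1 i = y.1 i := h i hik
      simp [hf, hg, hzy, hik]
    · simp only [hf, hg, if_neg hik]
      split
      · exact le_rfl
      · positivity
  have hfnn : ∀ i, 0 ≤ f i := fun i => by simp only [hf]; split <;> positivity
  have hfs : Summable f :=
    Summable.of_nonneg_of_le hfnn (fun i => le_trans (hfle i) (hgle i)) hsum2
  have h1 : dist1 z y ≤ ∑' i, g i := by
    rw [dist1_eq]
    exact Summable.tsum_le_tsum hfle hfs hgs
  have h2 : ∑' i, g i = 2 * ((2:ℝ)⁻¹) ^ k := by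
    have hz : ∑ i ∈ Finset.range k, g i = 0 :=
      Finset.sum_eq_zero fun i hi => by simp [hg, Finset.mem_range.1 hi]
    have hgk : ∀ i : ℕ, g (i + k) = ((2:ℝ)⁻¹) ^ i * ((2:ℝ)⁻¹) ^ k := fun i => by
      simp only [hg, if_neg (by omega : ¬ i + k < k)]
      rw [pow_add]
    have hadd := Summable.sum_add_tsum_nat_add (f := g) k hgs
    rw [hz, zero_add] at hadd
    rw [← hadd, tsum_congr hgk, tsum_mul_right,
      tsum_geometric_of_lt_one (by norm_num) (by norm_num)]
    norm_num [mul_comm]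
  exact h1.trans_eq h2

variable {φ : OneSided A → ℝ}

lemma abs_sub_le_varK (hφ : IsHolderWrt dist1 φ) {k : ℕ} {z y : OneSided A}
    (h : ∀ i, i < k → z.1 i = y.1 i) : |φ z - φ y| ≤ varK A φ k := by
  obtain ⟨C, hC, α, hα, hH⟩ := hφ
  refine le_csSup ⟨C * (2 * ((2:ℝ)⁻¹) ^ k) ^ α, ?_⟩ ⟨z, y, h, rfl⟩
  rintro v ⟨a, b, hab, rfl⟩
  calc |φ a - φ b| ≤ C * dist1 a b ^ α := hH a b
    _ ≤ C * (2 * ((2:ℝ)⁻¹) ^ k) ^ α := by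
        apply mul_le_mul_of_nonneg_left _ hC.le
        exact Real.rpow_le_rpow (dist1_nonneg a b) (dist1_le hab) hα.1.le

lemma varK_nonneg [Nonempty (OneSided A)] (hφ : IsHolderWrt dist1 φ) (k : ℕ) :
    0 ≤ varK A φ k := by
  have x0 : OneSided A := Classical.arbitrary _
  have h : |φ x0 - φ x0| ≤ varK A φ k := abs_sub_le_varK hφ (fun _ _ => rfl)
  simpa using h

lemma varK_le_geom (hφ : IsHolderWrt dist1 φ) :
    ∃ D q : ℝ, 0 ≤ q ∧ q < 1 ∧ ∀ k, varK A φ k ≤ D * q ^ k := by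
  obtain ⟨C, hC, α, hα, hH⟩ := hφ
  refine ⟨C * (2:ℝ) ^ α, ((2:ℝ)⁻¹) ^ α, Real.rpow_nonneg (by norm_num) α,
    Real.rpow_lt_one (by norm_num) (by norm_num) hα.1, fun k => ?_⟩
  have hbd : C * (2 * ((2:ℝ)⁻¹) ^ k) ^ α = C * (2:ℝ) ^ α * (((2:ℝ)⁻¹) ^ α) ^ k := by
    rw [Real.mul_rpow (by norm_num) (by positivity)]
    rw [← Real.rpow_natCast ((2:ℝ)⁻¹) k, ← Real.rpow_mul (by norm_num),
      mul_comm (k:ℝ) α, Real.rpow_mul (by norm_num), Real.rpow_natCast]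
    ring
  apply Real.sSup_le
  · rintro v ⟨a, b, hab, rfl⟩
    rw [← hbd]
    calc |φ a - φ b| ≤ C * dist1 a b ^ α := hH a b
      _ ≤ C * (2 * ((2:ℝ)⁻¹) ^ k) ^ α := by
          apply mul_le_mul_of_nonneg_left _ hC.le
          exact Real.rpow_le_rpow (dist1_nonneg a b) (dist1_le hab) hα.1.le
  · apply mul_nonneg (mul_nonneg hC.le (Real.rpow_nonneg (by norm_num) _))
    exact pow_nonneg (Real.rpow_nonneg (by norm_num) _) _

lemma summable_varK [Nonempty (OneSided A)] (hφ : IsHolderWrt dist1 φ) :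
    Summable (varK A φ) := by
  obtain ⟨D, q, hq0, hq1, hle⟩ := varK_le_geom hφ
  exact Summable.of_nonneg_of_le (varK_nonneg hφ) hle
    ((summable_geometric_of_lt_one hq0 hq1).mul_left D)

lemma V_le_varSum [Nonempty (OneSided A)] (hφ : IsHolderWrt dist1 φ) (n : ℕ) :
    (∑ k ∈ Finset.range n, varK A φ (k+1)) ≤ varSum A φ := by
  have hs := summable_varK hφ
  have h1 : (∑ k ∈ Finset.range (n+1), varK A φ k) ≤ varSum A φ :=
    Summable.sum_le_tsum _ (fun k _ => varK_nonneg hφ k) hs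
  rw [Finset.sum_range_succ'] at h1
  have h0 := varK_nonneg hφ 0
  linarith

lemma abs_le_supNorm (hφ : IsHolderWrt dist1 φ) (z : OneSided A) :
    ∀ a : OneSided A, |φ a| ≤ supNorm A φ := by
  obtain ⟨C, hC, α, hα, hH⟩ := hφ
  intro a₀
  refine le_ciSup (f := fun x : OneSided A => |φ x|) ⟨|φ z| + C * (2:ℝ) ^ α, ?_⟩ a₀
  rintro v ⟨a, rfl⟩
  have h1 : |φ a - φ z| ≤ C * (2:ℝ) ^ α := by
    calc |φ a - φ z| ≤ C * dist1 a z ^ α := hH a z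
      _ ≤ C * (2:ℝ) ^ α := by
          apply mul_le_mul_of_nonneg_left _ hC.le
          apply Real.rpow_le_rpow (dist1_nonneg a z) _ hα.1.le
          have hd := dist1_le (z := a) (y := z) (k := 0) (fun i hi => absurd hi (Nat.not_lt_zero i))
          simpa using hd
  have h2 : |φ a| ≤ |φ z| + |φ a - φ z| := by
    have := abs_add_le (φ z) (φ a - φ z)
    simpa using this
  linarith

lemma supNorm_nonneg [Nonempty (OneSided A)] (hφ : IsHolderWrt dist1 φ) :
    0 ≤ supNorm A φ := by
  have x0 : OneSided A := Classical.arbitrary _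
  exact le_trans (abs_nonneg _) (abs_le_supNorm hφ x0 x0)

lemma ofReal_exp_mul (a b : ℝ) :
    ENNReal.ofReal (Real.exp a) * ENNReal.ofReal (Real.exp b)
      = ENNReal.ofReal (Real.exp (a + b)) := by
  rw [← ENNReal.ofReal_mul (Real.exp_nonneg a), ← Real.exp_add]

variable {μ : Measure (OneSided A)}

lemma one_step (hpair : ConformalPair A φ 0 μ) (hφ : IsHolderWrt dist1 φ)
    {n : ℕ} (hn : 0 < n) (w : Fin n → Fin r) {x : OneSided A} (hx : x ∈ Cyl A w) :
    μ (Cyl A w) ≤ ENNReal.ofReal (Real.exp (φ x + varK A φ n)) * μ (shift1 '' Cyl A w) ∧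
    ENNReal.ofReal (Real.exp (φ x - varK A φ n)) * μ (shift1 '' Cyl A w) ≤ μ (Cyl A w) := by
  set v := varK A φ n with hv
  have hvar : ∀ z ∈ Cyl A w, |φ z - φ x| ≤ v := by
    intro z hz
    apply abs_sub_le_varK hφ
    intro i hi
    exact (hz ⟨i, hi⟩).trans (hx ⟨i, hi⟩).symm
  have hmeas := measurableSet_cyl (A := A) w
  have heq : μ (shift1 '' Cyl A w)
      = ∫⁻ z in Cyl A w, ENNReal.ofReal (Real.exp (0 - φ z)) ∂μ :=
    hpair.2 (w ⟨0, hn⟩) _ hmeas (fun z hz => hz ⟨0, hn⟩)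
  have hup : μ (shift1 '' Cyl A w) ≤ ENNReal.ofReal (Real.exp (-(φ x) + v)) * μ (Cyl A w) := by
    calc μ (shift1 '' Cyl A w)
        = ∫⁻ z in Cyl A w, ENNReal.ofReal (Real.exp (0 - φ z)) ∂μ := heq
      _ ≤ ∫⁻ _z in Cyl A w, ENNReal.ofReal (Real.exp (-(φ x) + v)) ∂μ := by
          apply setLIntegral_mono' hmeas
          intro z hz
          apply ENNReal.ofReal_le_ofReal
          apply Real.exp_le_exp.2
          have hzz := abs_le.1 (hvar z hz)
          linarith [hzz.1, hzz.2]
      _ = ENNReal.ofReal (Real.exp (-(φ x) + v)) * μ (Cyl A w) := setLIntegral_const _ _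
  have hdn : ENNReal.ofReal (Real.exp (-(φ x) - v)) * μ (Cyl A w) ≤ μ (shift1 '' Cyl A w) := by
    calc ENNReal.ofReal (Real.exp (-(φ x) - v)) * μ (Cyl A w)
        = ∫⁻ _z in Cyl A w, ENNReal.ofReal (Real.exp (-(φ x) - v)) ∂μ :=
          (setLIntegral_const _ _).symm
      _ ≤ ∫⁻ z in Cyl A w, ENNReal.ofReal (Real.exp (0 - φ z)) ∂μ := by
          apply setLIntegral_mono' hmeas
          intro z hz
          apply ENNReal.ofReal_le_ofReal
          apply Real.exp_le_exp.2
          have hzz := abs_le.1 (hvar z hz)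
          linarith [hzz.1, hzz.2]
      _ = μ (shift1 '' Cyl A w) := heq.symm
  constructor
  · calc μ (Cyl A w)
        = ENNReal.ofReal (Real.exp (φ x + v))
            * (ENNReal.ofReal (Real.exp (-(φ x) - v)) * μ (Cyl A w)) := by
          rw [← mul_assoc, ofReal_exp_mul]
          have he : (φ x + v) + (-(φ x) - v) = 0 := by ring
          rw [he, Real.exp_zero, ENNReal.ofReal_one, one_mul]
      _ ≤ ENNReal.ofReal (Real.exp (φ x + v)) * μ (shift1 '' Cyl A w) :=
          mul_le_mul_right hdn _
  · calc ENNReal.ofReal (Real.exp (φ x - v)) * μ (shift1 '' Cyl A w)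
        ≤ ENNReal.ofReal (Real.exp (φ x - v))
            * (ENNReal.ofReal (Real.exp (-(φ x) + v)) * μ (Cyl A w)) :=
          mul_le_mul_right hup _
      _ = μ (Cyl A w) := by
          rw [← mul_assoc, ofReal_exp_mul]
          have he : (φ x - v) + (-(φ x) + v) = 0 := by ring
          rw [he, Real.exp_zero, ENNReal.ofReal_one, one_mul]

lemma shift_cyl {n : ℕ} (w : Fin (n+1+1) → Fin r) (hw : AdmissibleWord A w) :
    shift1 '' Cyl A w = Cyl A (fun i : Fin (n+1) => w i.succ) := by
  ext y
  constructor
  · rintro ⟨z, hz, rfl⟩ i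
    exact hz i.succ
  · intro hy
    have hA : A (w 0) (y.1 0) := by
      have h0 : y.1 0 = w ((0 : Fin (n+1)).succ) := hy 0
      rw [h0]
      exact hw 0 (by omega)
    refine ⟨prepend (w 0) y hA, ?_, shift1_prepend _ _ _⟩
    rintro ⟨i, hi⟩
    match i with
    | 0 => rfl
    | (m+1) => exact hy ⟨m, by omega⟩

lemma shift_cyl_one (w : Fin 1 → Fin r) :
    shift1 '' Cyl A w = CS A (Nx A {w 0}) := by
  ext y
  constructor
  · rintro ⟨z, hz, rfl⟩
    refine ⟨w 0, rfl, ?_⟩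
    have h0 : z.1 0 = w 0 := hz 0
    have h1 := z.2 0
    rwa [h0] at h1
  · rintro ⟨j, hj, hA⟩
    have hj' : j = w 0 := hj
    refine ⟨prepend j y hA, ?_, shift1_prepend _ _ _⟩
    rintro ⟨i, hi⟩
    match i with
    | 0 => exact hj'

lemma shift_CS (S : Set (Fin r)) : shift1 '' CS A S = CS A (Nx A S) := by
  ext y
  constructor
  · rintro ⟨z, hz, rfl⟩
    exact ⟨z.1 0, hz, z.2 0⟩
  · rintro ⟨j, hj, hA⟩
    exact ⟨prepend j y hA, hj, shift1_prepend _ _ _⟩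

lemma CS_step (hpair : ConformalPair A φ 0 μ) (hφ : IsHolderWrt dist1 φ) (S : Set (Fin r)) :
    μ (CS A (Nx A S)) ≤ ENNReal.ofReal (Real.exp (supNorm A φ)) * μ (CS A S) := by
  set K := supNorm A φ with hK
  have hcover : CS A S = ⋃ j : Fin r, (CS A S ∩ {x : OneSided A | x.1 0 = j}) := by
    ext x
    constructor
    · intro hx
      exact Set.mem_iUnion.2 ⟨x.1 0, hx, rfl⟩
    · intro hx
      obtain ⟨j, hj, _⟩ := Set.mem_iUnion.1 hx
      exact hj
  have hEj : ∀ j : Fin r, MeasurableSet (CS A S ∩ {x : OneSided A | x.1 0 = j}) := fun j =>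
    (measurableSet_CS S).inter (measurable_coord 0 (measurableSet_singleton j))
  have hdisj : Pairwise (Function.onFun Disjoint
      (fun j : Fin r => CS A S ∩ {x : OneSided A | x.1 0 = j})) := by
    intro a b hab
    simp only [Function.onFun]
    apply Set.disjoint_left.2
    rintro x ⟨_, hxa⟩ ⟨_, hxb⟩
    exact hab (hxa.symm.trans hxb)
  calc μ (CS A (Nx A S)) = μ (shift1 '' CS A S) := by rw [shift_CS]
    _ = μ (⋃ j : Fin r, shift1 '' (CS A S ∩ {x : OneSided A | x.1 0 = j})) := by
        rw [← Set.image_iUnion, ← hcover]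
    _ ≤ ∑' j : Fin r, μ (shift1 '' (CS A S ∩ {x : OneSided A | x.1 0 = j})) :=
        measure_iUnion_le _
    _ ≤ ∑' j : Fin r, ENNReal.ofReal (Real.exp K)
          * μ (CS A S ∩ {x : OneSided A | x.1 0 = j}) := by
        apply ENNReal.tsum_le_tsum
        intro j
        rw [hpair.2 j _ (hEj j) (fun z hz => hz.2)]
        calc ∫⁻ z in CS A S ∩ {x : OneSided A | x.1 0 = j},
              ENNReal.ofReal (Real.exp (0 - φ z)) ∂μ
            ≤ ∫⁻ _z in CS A S ∩ {x : OneSided A | x.1 0 = j},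
              ENNReal.ofReal (Real.exp K) ∂μ := by
              apply setLIntegral_mono' (hEj j)
              intro z _
              apply ENNReal.ofReal_le_ofReal
              apply Real.exp_le_exp.2
              have hzz := abs_le.1 (abs_le_supNorm hφ z z)
              rw [hK]
              linarith [hzz.1, hzz.2]
          _ = ENNReal.ofReal (Real.exp K)
              * μ (CS A S ∩ {x : OneSided A | x.1 0 = j}) := setLIntegral_const _ _
    _ = ENNReal.ofReal (Real.exp K)
          * ∑' j : Fin r, μ (CS A S ∩ {x : OneSided A | x.1 0 = j}) := ENNReal.tsum_mul_left
    _ = ENNReal.ofReal (Real.exp K) * μ (CS A S) := by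
        rw [← measure_iUnion hdisj hEj, ← hcover]

lemma CS_iter (hpair : ConformalPair A φ 0 μ) (hφ : IsHolderWrt dist1 φ)
    (m : ℕ) (S : Set (Fin r)) :
    μ (CS A ((Nx A)^[m] S)) ≤ ENNReal.ofReal (Real.exp (m * supNorm A φ)) * μ (CS A S) := by
  induction m with
  | zero => simp
  | succ m ih =>
    rw [Function.iterate_succ_apply']
    calc μ (CS A (Nx A ((Nx A)^[m] S)))
        ≤ ENNReal.ofReal (Real.exp (supNorm A φ)) * μ (CS A ((Nx A)^[m] S)) :=
          CS_step hpair hφ _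
      _ ≤ ENNReal.ofReal (Real.exp (supNorm A φ))
            * (ENNReal.ofReal (Real.exp (m * supNorm A φ)) * μ (CS A S)) :=
          mul_le_mul_right ih _
      _ = ENNReal.ofReal (Real.exp ((m+1 : ℕ) * supNorm A φ)) * μ (CS A S) := by
          rw [← mul_assoc, ofReal_exp_mul]
          have he : supNorm A φ + (m : ℝ) * supNorm A φ = ((m+1 : ℕ) : ℝ) * supNorm A φ := by
            push_cast; ring
          rw [he]

lemma cover {M : ℕ} (hmix : MixingWith A M) (i : Fin r) (y : OneSided A) :
    y ∈ CS A ((Nx A)^[M] {i}) := by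
  obtain ⟨u, hu, hu0, huM⟩ := hmix.2 i (y.1 0)
  have key : ∀ m, ∀ hm : m ≤ M, u ⟨m, Nat.lt_succ_of_le hm⟩ ∈ (Nx A)^[m] {i} := by
    intro m
    induction m with
    | zero => intro _; exact hu0
    | succ m ihm =>
      intro hm
      rw [Function.iterate_succ_apply']
      exact ⟨u ⟨m, by omega⟩, ihm (by omega), hu m (by omega)⟩
  have hkey := key M le_rfl
  have hlast : u ⟨M, Nat.lt_succ_of_le le_rfl⟩ = y.1 0 := huM
  show y.1 0 ∈ (Nx A)^[M] {i}
  rw [← hlast]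
  exact hkey

lemma fol_lb {M : ℕ} (hmix : MixingWith A M) (hpair : ConformalPair A φ 0 μ)
    (hφ : IsHolderWrt dist1 φ) [Nonempty (OneSided A)] (i : Fin r) :
    ENNReal.ofReal (Real.exp (-((M:ℝ) * supNorm A φ))) ≤ μ (CS A (Nx A {i})) := by
  haveI := hpair.1
  obtain ⟨m, rfl⟩ : ∃ m, M = m + 1 := ⟨M - 1, by have h1M := hmix.1; omega⟩
  have hcov : CS A ((Nx A)^[m+1] {i}) = Set.univ :=
    Set.eq_univ_of_forall (cover hmix i)
  have hiter : μ (CS A ((Nx A)^[m+1] {i}))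
      ≤ ENNReal.ofReal (Real.exp (m * supNorm A φ)) * μ (CS A (Nx A {i})) := by
    rw [Function.iterate_succ_apply]
    exact CS_iter hpair hφ m (Nx A {i})
  have h1 : (1 : ℝ≥0∞) ≤ ENNReal.ofReal (Real.exp (m * supNorm A φ)) * μ (CS A (Nx A {i})) := by
    rw [← measure_univ (μ := μ), ← hcov]
    exact hiter
  have hKnn : 0 ≤ supNorm A φ := supNorm_nonneg hφ
  calc ENNReal.ofReal (Real.exp (-(((m+1 : ℕ) : ℝ) * supNorm A φ)))
      = ENNReal.ofReal (Real.exp (-(((m+1 : ℕ) : ℝ) * supNorm A φ))) * 1 := (mul_one _).symm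
    _ ≤ ENNReal.ofReal (Real.exp (-(((m+1 : ℕ) : ℝ) * supNorm A φ)))
          * (ENNReal.ofReal (Real.exp (m * supNorm A φ)) * μ (CS A (Nx A {i}))) :=
        mul_le_mul_right h1 _
    _ = ENNReal.ofReal (Real.exp (-(((m+1 : ℕ) : ℝ) * supNorm A φ) + m * supNorm A φ))
          * μ (CS A (Nx A {i})) := by
        rw [← mul_assoc, ofReal_exp_mul]
    _ ≤ 1 * μ (CS A (Nx A {i})) := by
        apply mul_le_mul_left
        rw [← ENNReal.ofReal_one]
        apply ENNReal.ofReal_le_ofReal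
        rw [← Real.exp_zero]
        apply Real.exp_le_exp.2
        push_cast
        nlinarith
    _ = μ (CS A (Nx A {i})) := one_mul _

lemma main_ind (hpair : ConformalPair A φ 0 μ) (hφ : IsHolderWrt dist1 φ) :
    ∀ (n : ℕ) (w : Fin (n+1) → Fin r), AdmissibleWord A w → ∀ x ∈ Cyl A w,
      (μ (Cyl A w) ≤ ENNReal.ofReal (Real.exp
          ((∑ k ∈ Finset.range (n+1), φ (shift1^[k] x))
            + ∑ k ∈ Finset.range (n+1), varK A φ (k+1)))
          * μ (shift1^[n+1] '' Cyl A w)) ∧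
      (ENNReal.ofReal (Real.exp
          ((∑ k ∈ Finset.range (n+1), φ (shift1^[k] x))
            - ∑ k ∈ Finset.range (n+1), varK A φ (k+1)))
          * μ (shift1^[n+1] '' Cyl A w) ≤ μ (Cyl A w)) ∧
      shift1^[n+1] '' Cyl A w = CS A (Nx A {w (Fin.last n)}) := by
  intro n
  induction n with
  | zero =>
    intro w hw x hx
    have hs := one_step hpair hφ Nat.one_pos w hx
    have himg : shift1^[0+1] '' Cyl A w = CS A (Nx A {w (Fin.last 0)}) := by
      rw [Function.iterate_one, shift_cyl_one]
      rfl
    refine ⟨?_, ?_, himg⟩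
    · simpa [Finset.sum_range_one, Function.iterate_one] using hs.1
    · simpa [Finset.sum_range_one, Function.iterate_one] using hs.2
  | succ n ih =>
    intro w hw x hx
    set w' : Fin (n+1) → Fin r := fun i => w i.succ with hw'def
    have hw' : AdmissibleWord A w' := fun i h => hw (i+1) (Nat.succ_lt_succ h)
    have hx' : shift1 x ∈ Cyl A w' := fun i => hx i.succ
    obtain ⟨ih1, ih2, ih3⟩ := ih w' hw' (shift1 x) hx'
    have himg : shift1 '' Cyl A w = Cyl A w' := shift_cyl w hw
    have hit : shift1^[n+1+1] '' Cyl A w = shift1^[n+1] '' Cyl A w' := by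
      rw [Function.iterate_succ, Set.image_comp, himg]
    have hstep := one_step hpair hφ (Nat.succ_pos _) w hx
    have hS : (∑ k ∈ Finset.range (n+1+1), φ (shift1^[k] x))
        = φ x + ∑ k ∈ Finset.range (n+1), φ (shift1^[k] (shift1 x)) := by
      rw [Finset.sum_range_succ']
      simp only [Function.iterate_succ_apply, Function.iterate_zero_apply]
      ring
    have hV : (∑ k ∈ Finset.range (n+1+1), varK A φ (k+1))
        = (∑ k ∈ Finset.range (n+1), varK A φ (k+1)) + varK A φ (n+1+1) :=
      Finset.sum_range_succ _ _
    have hlast : w' (Fin.last n) = w (Fin.last (n+1)) := rfl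
    refine ⟨?_, ?_, by rw [hit, ih3, hlast]⟩
    · have hexp : (φ x + varK A φ (n+1+1))
          + ((∑ k ∈ Finset.range (n+1), φ (shift1^[k] (shift1 x)))
            + ∑ k ∈ Finset.range (n+1), varK A φ (k+1))
          = (∑ k ∈ Finset.range (n+1+1), φ (shift1^[k] x))
            + ∑ k ∈ Finset.range (n+1+1), varK A φ (k+1) := by
        rw [hS, hV]; ring
      calc μ (Cyl A w)
          ≤ ENNReal.ofReal (Real.exp (φ x + varK A φ (n+1+1))) * μ (shift1 '' Cyl A w) :=
            hstep.1
        _ = ENNReal.ofReal (Real.exp (φ x + varK A φ (n+1+1))) * μ (Cyl A w') := by rw [himg]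
        _ ≤ ENNReal.ofReal (Real.exp (φ x + varK A φ (n+1+1)))
              * (ENNReal.ofReal (Real.exp
                  ((∑ k ∈ Finset.range (n+1), φ (shift1^[k] (shift1 x)))
                    + ∑ k ∈ Finset.range (n+1), varK A φ (k+1)))
                * μ (shift1^[n+1] '' Cyl A w')) := mul_le_mul_right ih1 _
        _ = ENNReal.ofReal (Real.exp
              ((∑ k ∈ Finset.range (n+1+1), φ (shift1^[k] x))
                + ∑ k ∈ Finset.range (n+1+1), varK A φ (k+1)))
              * μ (shift1^[n+1+1] '' Cyl A w) := by
            rw [← mul_assoc, ofReal_exp_mul, hit, hexp]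
    · have hexp : (φ x - varK A φ (n+1+1))
          + ((∑ k ∈ Finset.range (n+1), φ (shift1^[k] (shift1 x)))
            - ∑ k ∈ Finset.range (n+1), varK A φ (k+1))
          = (∑ k ∈ Finset.range (n+1+1), φ (shift1^[k] x))
            - ∑ k ∈ Finset.range (n+1+1), varK A φ (k+1) := by
        rw [hS, hV]; ring
      calc ENNReal.ofReal (Real.exp
              ((∑ k ∈ Finset.range (n+1+1), φ (shift1^[k] x))
                - ∑ k ∈ Finset.range (n+1+1), varK A φ (k+1)))
              * μ (shift1^[n+1+1] '' Cyl A w)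
          = ENNReal.ofReal (Real.exp (φ x - varK A φ (n+1+1)))
              * (ENNReal.ofReal (Real.exp
                  ((∑ k ∈ Finset.range (n+1), φ (shift1^[k] (shift1 x)))
                    - ∑ k ∈ Finset.range (n+1), varK A φ (k+1)))
                * μ (shift1^[n+1] '' Cyl A w')) := by
            rw [← mul_assoc, ofReal_exp_mul, hit, hexp]
        _ ≤ ENNReal.ofReal (Real.exp (φ x - varK A φ (n+1+1))) * μ (Cyl A w') :=
            mul_le_mul_right ih2 _
        _ = ENNReal.ofReal (Real.exp (φ x - varK A φ (n+1+1))) * μ (shift1 '' Cyl A w) := by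
            rw [himg]
        _ ≤ μ (Cyl A w) := hstep.2

end BGE

/-- (Bowen's Gibbs estimate) For the conformal measure `μ` of a Hölder `φ`
with constant `P = 0` on a subshift mixing with constant `M`: for every
`n ≥ 1`, every `n`-cylinder `[w]` and every `x ∈ [w]`,
`exp(−M·‖φ‖ − var φ) · exp(S_nφ(x)) ≤ μ([w]) ≤ exp(var φ) · exp(S_nφ(x))`. -/
theorem bowen_gibbs_estimate
    {A : Fin r → Fin r → Prop} (M : ℕ) (hmix : MixingWith A M)
    (hcylne : ∀ (n : ℕ) (w : Fin n → Fin r), AdmissibleWord A w → (Cyl A w).Nonempty)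
    (φ : OneSided A → ℝ) (hφ : IsHolderWrt dist1 φ)
    (μ : Measure (OneSided A)) (hpair : ConformalPair A φ 0 μ)
    (n : ℕ) (hn : 1 ≤ n) (w : Fin n → Fin r) (hw : AdmissibleWord A w)
    (x : OneSided A) (hx : x ∈ Cyl A w) :
    ENNReal.ofReal (Real.exp (-(M * supNorm A φ) - varSum A φ) *
        Real.exp (∑ k ∈ Finset.range n, φ (shift1^[k] x))) ≤ μ (Cyl A w) ∧
      μ (Cyl A w) ≤ ENNReal.ofReal (Real.exp (varSum A φ) *
        Real.exp (∑ k ∈ Finset.range n, φ (shift1^[k] x))) := by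
  haveI hprob : IsProbabilityMeasure μ := hpair.1
  have hne : Nonempty (OneSided A) := ⟨x⟩
  obtain ⟨m, rfl⟩ : ∃ m, n = m + 1 := ⟨n - 1, by omega⟩
  obtain ⟨h1, h2, h3⟩ := BGE.main_ind hpair hφ m w hw x hx
  set S := ∑ k ∈ Finset.range (m+1), φ (shift1^[k] x) with hSdef
  set V := ∑ k ∈ Finset.range (m+1), varK A φ (k+1) with hVdef
  have hVle : V ≤ varSum A φ := BGE.V_le_varSum hφ (m+1)
  have hVnn : 0 ≤ V := Finset.sum_nonneg fun k _ => BGE.varK_nonneg hφ _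
  have hK : 0 ≤ supNorm A φ := BGE.supNorm_nonneg hφ
  constructor
  · have hfol := BGE.fol_lb hmix hpair hφ (μ := μ) (w (Fin.last m))
    calc ENNReal.ofReal (Real.exp (-(M * supNorm A φ) - varSum A φ) * Real.exp S)
        ≤ ENNReal.ofReal (Real.exp (S - V))
            * ENNReal.ofReal (Real.exp (-((M:ℝ) * supNorm A φ))) := by
          rw [BGE.ofReal_exp_mul, ← Real.exp_add]
          apply ENNReal.ofReal_le_ofReal
          apply Real.exp_le_exp.2
          linarith
      _ ≤ ENNReal.ofReal (Real.exp (S - V)) * μ (BGE.CS A (BGE.Nx A {w (Fin.last m)})) :=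
          mul_le_mul_right hfol _
      _ = ENNReal.ofReal (Real.exp (S - V)) * μ (shift1^[m+1] '' Cyl A w) := by rw [h3]
      _ ≤ μ (Cyl A w) := h2
  · calc μ (Cyl A w)
        ≤ ENNReal.ofReal (Real.exp (S + V)) * μ (shift1^[m+1] '' Cyl A w) := h1
      _ ≤ ENNReal.ofReal (Real.exp (S + V)) * 1 := mul_le_mul_right prob_le_one _
      _ = ENNReal.ofReal (Real.exp (S + V)) := mul_one _
      _ ≤ ENNReal.ofReal (Real.exp (varSum A φ) * Real.exp S) := by
          rw [← Real.exp_add]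
          exact ENNReal.ofReal_le_ofReal (Real.exp_le_exp.2 (by linarith))
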